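/- arXiv:1508.01712 — 6 statements merged into one kernel-verified Lean document; each statement's English description precedes it below -/
import Mathlib

section
/- For integers N ≥ 1, n ≥ 0 with n ≤ N, and an element g of Z/NZ of additive order d, the number of subsets S of Z/NZ of size n that are invariant under translation by g equals C(N/d, n/d) if d divides n, and equals 0 otherwise. -/
/-!
A set invariant under translation by `g` is invariant under the whole subgroup `H = ⟨g⟩`, of
order `d`, so it is a union of `H`-cosets. Taking preimages under `G → G ⧸ H` is therefore a
bijection from subsets `T` of the quotient, which has `N / d` elements, onto the invariant sets,
and it multiplies sizes by `d`: an invariant set of size `n` exists only if `d ∣ n`, and then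
corresponds to a subset of the quotient of size `n / d`.
-/

open Finset QuotientAddGroup AddAction
open scoped Pointwise

theorem Finset.natCard_subtype_mul_card_eq {α : Type*} [Finite α] {d : ℕ} (hd : 0 < d)
    (n : ℕ) :
    Nat.card {T : Finset α // d * #T = n} =
      if d ∣ n then (Nat.card α).choose (n / d) else 0 := by
  have := Fintype.ofFinite α
  split_ifs with hdn
  · obtain ⟨m, rfl⟩ := hdn
    rw [Nat.mul_div_cancel_left m hd, Nat.card_eq_fintype_card, Nat.card_eq_fintype_card,
      ← Fintype.card_finset_len]
    exact Fintype.card_congr (Equiv.subtypeEquivRight fun T => Nat.mul_left_cancel_iff hd)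
  · exact Nat.card_eq_zero.mpr (.inl ⟨fun T => hdn ⟨#T.1, T.2.symm⟩⟩)

variable {G : Type*} [AddCommGroup G] {H : AddSubgroup G}

theorem mem_of_mk_eq_of_le_stabilizer [DecidableEq G] {S : Finset G}
    (hS : H ≤ stabilizer G S) {x y : G} (hy : y ∈ S) (hxy : (x : G ⧸ H) = y) : x ∈ S := by
  have hsub : x - y ∈ H := by
    rw [QuotientAddGroup.eq, neg_add_eq_sub] at hxy
    simpa using neg_mem hxy
  rw [← mem_stabilizer_iff.mp (hS hsub)]
  simpa using vadd_mem_vadd_finset (a := x - y) hy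

variable [Fintype G] [DecidableEq (G ⧸ H)]

theorem card_filter_mk_mem (T : Finset (G ⧸ H)) :
    #(univ.filter fun x : G => (x : G ⧸ H) ∈ T) = Nat.card H * #T := by
  calc #(univ.filter fun x : G => (x : G ⧸ H) ∈ T)
      = Nat.card ((↑) ⁻¹' (T : Set (G ⧸ H)) : Set G) := by
        rw [← Set.ncard_coe_finset, ← Nat.card_coe_set_eq, coe_filter]
        simp [Set.preimage]
    _ = Nat.card H * Nat.card (T : Set (G ⧸ H)) := by
        rw [Nat.card_congr (preimageMkEquivAddSubgroupProdSet H T), Nat.card_prod]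
    _ = Nat.card H * #T := congrArg _ (Nat.card_eq_finsetCard T)

theorem image_mk_filter_mk_mem (T : Finset (G ⧸ H)) :
    (univ.filter fun x : G => (x : G ⧸ H) ∈ T).image (↑) = T := by
  ext q
  simp only [mem_image, mem_filter, mem_univ, true_and]
  exact ⟨fun ⟨x, hx, hxq⟩ => hxq ▸ hx, fun hq => ⟨q.out, by simpa using hq, by simp⟩⟩

variable [DecidableEq G]

theorem le_stabilizer_filter_mk_mem (T : Finset (G ⧸ H)) :
    H ≤ stabilizer G (univ.filter fun x : G => (x : G ⧸ H) ∈ T) := by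
  intro h hh
  rw [mem_stabilizer_iff]
  ext x
  simp only [mem_vadd_finset, mem_filter, mem_univ, true_and, vadd_eq_add]
  constructor
  · rintro ⟨y, hy, rfl⟩
    rwa [add_comm, mk_add_of_mem y hh]
  · intro hx
    refine ⟨-h + x, ?_, by abel⟩
    rwa [add_comm, mk_add_of_mem x (neg_mem hh)]

theorem filter_mk_mem_image_mk {S : Finset G} (hS : H ≤ stabilizer G S) :
    univ.filter (fun x : G => (x : G ⧸ H) ∈ S.image (↑)) = S := by
  ext x
  simp only [mem_filter, mem_univ, true_and, mem_image]
  exact ⟨fun ⟨y, hy, hyx⟩ => mem_of_mk_eq_of_le_stabilizer hS hy hyx.symm,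
    fun hx => ⟨x, hx, rfl⟩⟩

variable (H) in
def finsetQuotientEquiv : Finset (G ⧸ H) ≃ {S : Finset G // H ≤ stabilizer G S} where
  toFun T := ⟨univ.filter fun x : G => (x : G ⧸ H) ∈ T, le_stabilizer_filter_mk_mem T⟩
  invFun S := S.1.image ((↑) : G → G ⧸ H)
  left_inv T := image_mk_filter_mk_mem T
  right_inv S := Subtype.ext (filter_mk_mem_image_mk S.2)

theorem natCard_card_eq_and_le_stabilizer (n : ℕ) :
    Nat.card {S : Finset G // #S = n ∧ H ≤ stabilizer G S} =
      if Nat.card H ∣ n then (Nat.card (G ⧸ H)).choose (n / Nat.card H) else 0 := by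
  rw [← Finset.natCard_subtype_mul_card_eq Nat.card_pos]
  refine Nat.card_congr <| (Equiv.subtypeEquivRight fun S => and_comm).trans <|
    (Equiv.subtypeSubtypeEquivSubtypeInter _ _).symm.trans <|
    (Equiv.subtypeEquiv (finsetQuotientEquiv H) fun T => ?_).symm
  rw [← card_filter_mk_mem]
  rfl

theorem card_fixed_subsets_general (N n : ℕ) (hN : 0 < N) (g : ZMod N) (d : ℕ)
    (hd : addOrderOf g = d) :
    Nat.card {S : Finset (ZMod N) // S.card = n ∧ S.image (fun x => g + x) = S} =
      if d ∣ n then Nat.choose (N / d) (n / d) else 0 := by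
  classical
  have : NeZero N := ⟨hN.ne'⟩
  have hinv (S : Finset (ZMod N)) :
      S.image (fun x => g + x) = S ↔ AddSubgroup.zmultiples g ≤ stabilizer (ZMod N) S := by
    rw [AddSubgroup.zmultiples_le, mem_stabilizer_iff]
    exact Iff.rfl
  have hcard : Nat.card (AddSubgroup.zmultiples g) = d := (Nat.card_zmultiples g).trans hd
  have hquot : Nat.card (ZMod N ⧸ AddSubgroup.zmultiples g) = N / d := by
    rw [← AddSubgroup.index_eq_card]
    refine Nat.eq_div_of_mul_eq_right (hd ▸ (addOrderOf_pos g).ne') ?_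
    rw [← hcard, AddSubgroup.card_mul_index, Nat.card_zmod]
  simp_rw [hinv, natCard_card_eq_and_le_stabilizer, hcard, hquot]

theorem card_fixed_subsets (N n : ℕ) (hN : 0 < N) (hn : n ≤ N) (g : ZMod N) (d : ℕ)
    (hd : addOrderOf g = d) :
    Nat.card {S : Finset (ZMod N) // S.card = n ∧ S.image (fun x => g + x) = S} =
      if d ∣ n then Nat.choose (N / d) (n / d) else 0 :=
  card_fixed_subsets_general N n hN g d hd
end

section
/- Let n, m ≥ 0 and k > 0 be integers. Then the expression F(n,m,k) = (k / ((2n+k)(2m+k))) · Σ_{d | gcd(2n+k, n, m)} φ(d) · C((2n+k)/d, n/d) · C((2m+k)/d, m/d) is a positive integer. -/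
/-!
Burnside's lemma, for the action of `ZMod (2n+k) × ZMod (2m+k)` on triples `(A, B, t)` with `A` an
`n`-subset of `ZMod (2n+k)`, `B` an `m`-subset of `ZMod (2m+k)` and `t ∈ ZMod k`. A subset `A` is
read as a closed `±1` path around the circle, down-steps at `A`, which rises by `k` per turn;
rotating `A` by `i` shifts `t` by the height of the path after `i` steps (mod `k`), and rotating `B`
by `j` shifts it back by the corresponding height of `B`. The number of orbits is the integer `F`.

If `A` is invariant under `i`, its path is periodic and its height after `i` steps is exactly
`k · i / (2n+k)`. Hence `(i, j)` fixes `(A, B, t)` iff `A`, `B` are invariant and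
`i / (2n+k) = j / (2m+k)`, which forces `i` and `j` to have the same order `d`; an element of order
`d` fixes `C((2n+k)/d, n/d)` subsets `A` if `d ∣ n`, and none otherwise. Grouping rotations by
their order produces the totients.
-/

open Finset Pointwise

namespace QuotientAddGroup

variable {G : Type*} [AddCommGroup G] [Fintype G] {H : AddSubgroup G} [DecidableEq (G ⧸ H)]

lemma card_filter_mk_mem (t : Finset (G ⧸ H)) :
    #{x : G | (x : G ⧸ H) ∈ t} = Nat.card H * #t := by
  have hpre : mk ⁻¹' (t : Set (G ⧸ H)) = ↑({x : G | (x : G ⧸ H) ∈ t} : Finset G) := by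
    ext; simp
  have := Nat.card_congr (preimageMkEquivAddSubgroupProdSet H t)
  rwa [Nat.card_prod, hpre, Nat.card_coe_set_eq, Set.ncard_coe_finset, Nat.card_coe_set_eq,
    Set.ncard_coe_finset] at this

lemma image_mk_filter_mk_mem (t : Finset (G ⧸ H)) :
    ({x : G | (x : G ⧸ H) ∈ t} : Finset G).image (↑) = t := by
  ext y
  induction y using QuotientAddGroup.induction_on
  simp only [mem_image, mem_filter, mem_univ, true_and]
  exact ⟨fun ⟨a, ha, hay⟩ => hay ▸ ha, fun hy => ⟨_, hy, rfl⟩⟩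

variable [DecidableEq G]

lemma vadd_filter_mk_mem (t : Finset (G ⧸ H)) {h : G} (hh : h ∈ H) :
    h +ᵥ ({x : G | (x : G ⧸ H) ∈ t} : Finset G) =
      ({x : G | (x : G ⧸ H) ∈ t} : Finset G) := by
  ext x
  rw [← Finset.mem_coe, Finset.coe_vadd_finset, Set.mem_vadd_set_iff_neg_vadd_mem]
  simp [vadd_eq_add, add_comm, mk_add_of_mem x (neg_mem hh)]

lemma filter_mk_mem_image_mk {s : Finset G} (hs : H ≤ AddAction.stabilizer G s) :
    ({x : G | (x : G ⧸ H) ∈ s.image (↑)} : Finset G) = s := by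
  ext x
  simp only [mem_filter, mem_univ, true_and, mem_image]
  refine ⟨fun ⟨a, ha, hax⟩ => ?_, fun hx => ⟨x, hx, rfl⟩⟩
  have hmem : -a + x ∈ AddAction.stabilizer G s := hs (QuotientAddGroup.eq.mp hax)
  rw [AddAction.mem_stabilizer_iff] at hmem
  rw [← hmem, Finset.mem_vadd_finset]
  exact ⟨a, ha, by simp [vadd_eq_add]⟩

end QuotientAddGroup

namespace Set.powersetCard

variable {G : Type*} [AddCommGroup G] [DecidableEq G]

lemma zmultiples_le_stabilizer_of_mem_fixedBy {c : ℕ} {g : G} {s : powersetCard G c}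
    (hs : s ∈ AddAction.fixedBy (powersetCard G c) g) :
    AddSubgroup.zmultiples g ≤ AddAction.stabilizer G (s : Finset G) := by
  rw [AddSubgroup.zmultiples_le, AddAction.mem_stabilizer_iff, ← coe_vadd,
    AddAction.mem_fixedBy.mp hs]

/-- The invariant `c`-subsets are the preimages of the `c / d`-subsets of `G ⧸ ⟨g⟩`. -/
theorem card_fixedBy [Fintype G] (g : G) (c : ℕ) :
    Nat.card (AddAction.fixedBy (powersetCard G c) g) =
      if addOrderOf g ∣ c then (Nat.card G / addOrderOf g).choose (c / addOrderOf g) else 0 := by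
  classical
  set H := AddSubgroup.zmultiples g
  have hH : Nat.card H = addOrderOf g := Nat.card_zmultiples g
  have hd : 0 < addOrderOf g := addOrderOf_pos g
  have hcard {s : powersetCard G c} (hs : s ∈ AddAction.fixedBy _ g) :
      c = addOrderOf g * #((s : Finset G).image ((↑) : G → G ⧸ H)) := by
    rw [← hH, ← QuotientAddGroup.card_filter_mk_mem, QuotientAddGroup.filter_mk_mem_image_mk
      (zmultiples_le_stabilizer_of_mem_fixedBy hs), Set.powersetCard.card_eq]
  split_ifs with hdc
  · have hquot : Nat.card (G ⧸ H) = Nat.card G / addOrderOf g := by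
      rw [AddSubgroup.card_eq_card_quotient_mul_card_addSubgroup H, hH, Nat.mul_div_cancel _ hd]
    rw [← hquot, ← Set.powersetCard.card]
    refine Nat.card_congr
      { toFun := fun s => ⟨(s.1 : Finset G).image (↑), by
          simp [hcard s.2, Nat.mul_div_cancel_left _ hd]⟩
        invFun := fun t => ⟨⟨({x | (x : G ⧸ H) ∈ (t : Finset (G ⧸ H))} : Finset G), by
          rw [Set.powersetCard.mem_iff, QuotientAddGroup.card_filter_mk_mem, hH,
            Set.powersetCard.card_eq, Nat.mul_div_cancel' hdc]⟩, by
          rw [AddAction.mem_fixedBy, ← Subtype.coe_inj, Set.powersetCard.coe_vadd]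
          exact QuotientAddGroup.vadd_filter_mk_mem _ (AddSubgroup.mem_zmultiples g)⟩
        left_inv := fun s => Subtype.ext (Subtype.ext
          (QuotientAddGroup.filter_mk_mem_image_mk (zmultiples_le_stabilizer_of_mem_fixedBy s.2)))
        right_inv := fun t => Subtype.ext (QuotientAddGroup.image_mk_filter_mk_mem (H := H) t) }
  · rw [Nat.card_eq_zero]
    exact Or.inl ⟨fun s => hdc ⟨_, hcard s.2⟩⟩

lemma nonempty_of_le {α : Type*} [Finite α] {n : ℕ} (h : n ≤ Nat.card α) :
    Nonempty (powersetCard α n) :=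
  (Nat.card_pos_iff.mp (by rw [powersetCard.card]; exact Nat.choose_pos h)).1

end Set.powersetCard

lemma IsAddCyclic.sum_addOrderOf {G R : Type*} [AddGroup G] [Fintype G] [IsAddCyclic G]
    [AddCommMonoid R] (f : ℕ → R) :
    ∑ g : G, f (addOrderOf g) = ∑ d ∈ (Fintype.card G).divisors, d.totient • f d := by
  classical
  rw [← sum_fiberwise_of_maps_to (g := addOrderOf) (t := (Fintype.card G).divisors)
    (fun g _ => Nat.mem_divisors.mpr ⟨addOrderOf_dvd_card, Fintype.card_ne_zero⟩)]
  refine sum_congr rfl fun d hd => ?_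
  rw [sum_congr rfl fun g hg => by rw [(mem_filter.mp hg).2], sum_const,
    IsAddCyclic.card_addOrderOf_eq_totient (Nat.dvd_of_mem_divisors hd)]

lemma AddAction.sum_natCard_fixedBy_eq_natCard_orbits_mul_natCard {G X : Type*} [AddGroup G]
    [Fintype G] [AddAction G X] [Finite X] :
    ∑ g : G, Nat.card (fixedBy X g) = Nat.card (orbitRel.Quotient G X) * Nat.card G := by
  classical
  have := Fintype.ofFinite X
  simp only [Nat.card_eq_fintype_card]
  exact sum_card_fixedBy_eq_card_orbits_mul_card_addGroup G X

namespace ZMod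

lemma sum_range_natCast {N : ℕ} [NeZero N] {R : Type*} [AddCommMonoid R] (f : ZMod N → R) :
    ∑ s ∈ range N, f s = ∑ x, f x := by
  refine sum_nbij' (↑) val (by simp) (fun x _ => by simpa using val_lt x) ?_ ?_ (by simp)
  · intro s hs
    simpa using val_cast_of_lt (mem_range.mp hs)
  · intro x _
    simp

variable {N M : ℕ} [NeZero N] [NeZero M]

lemma addOrderOf_dvd_iff_dvd_mul_val (i : ZMod N) (t : ℕ) :
    addOrderOf i ∣ t ↔ N ∣ t * i.val := by
  rw [addOrderOf_dvd_iff_nsmul_eq_zero, ← natCast_eq_zero_iff, Nat.cast_mul, natCast_zmod_val,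
    nsmul_eq_mul]

lemma addOrderOf_eq_of_val_mul_eq {i : ZMod N} {j : ZMod M} (h : i.val * M = j.val * N) :
    addOrderOf i = addOrderOf j := by
  have key (t : ℕ) : addOrderOf i ∣ t ↔ addOrderOf j ∣ t := by
    rw [addOrderOf_dvd_iff_dvd_mul_val, addOrderOf_dvd_iff_dvd_mul_val,
      ← Nat.mul_dvd_mul_iff_right (Nat.pos_of_neZero M), mul_assoc, h,
      ← Nat.mul_dvd_mul_iff_right (Nat.pos_of_neZero N) (a := M), mul_comm M N, mul_assoc]
  exact Nat.dvd_antisymm ((key _).mpr dvd_rfl) ((key _).mp dvd_rfl)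

lemma exists_val_mul_eq_iff (i : ZMod N) :
    (∃ j : ZMod M, i.val * M = j.val * N) ↔ addOrderOf i ∣ M := by
  rw [addOrderOf_dvd_iff_dvd_mul_val, mul_comm M]
  refine ⟨fun ⟨j, hj⟩ => hj ▸ dvd_mul_left N j.val,
    fun hN => ⟨(i.val * M / N : ℕ), ?_⟩⟩
  have hlt : i.val * M / N < M :=
    Nat.div_lt_of_lt_mul (Nat.mul_lt_mul_of_pos_right (val_lt i) (Nat.pos_of_neZero M))
  rw [val_cast_of_lt hlt, Nat.div_mul_cancel hN]

lemma sum_ite_val_mul_eq (i : ZMod N) (f : ℕ → ℕ) :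
    ∑ j : ZMod M, (if i.val * M = j.val * N then f (addOrderOf j) else 0) =
      if addOrderOf i ∣ M then f (addOrderOf i) else 0 := by
  split_ifs with hM
  · obtain ⟨j₀, hj₀⟩ := (exists_val_mul_eq_iff i).mpr hM
    rw [sum_eq_single j₀ (fun j _ hj => if_neg fun h => hj (val_injective _
      (Nat.eq_of_mul_eq_mul_right (Nat.pos_of_neZero N) (h.symm.trans hj₀))))
      (by simp), if_pos hj₀, addOrderOf_eq_of_val_mul_eq hj₀]
  · exact sum_eq_zero fun j _ => if_neg fun h => hM ((exists_val_mul_eq_iff i).mp ⟨j, h⟩)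

end ZMod

abbrev Annulus (n m k : ℕ) : Type :=
  Set.powersetCard (ZMod (2 * n + k)) n × Set.powersetCard (ZMod (2 * m + k)) m × ZMod k

namespace Annulus

variable {ν : ℕ}

/-- The path reads the circle backwards (step `s` goes down iff `-s ∈ A`), so that `height` is a
cocycle for the action `A ↦ i +ᵥ A`. -/
def height (A : Finset (ZMod ν)) (a : ℕ) : ℤ :=
  ∑ s ∈ range a, if -(s : ZMod ν) ∈ A then -1 else 1

lemma height_zero (A : Finset (ZMod ν)) : height A 0 = 0 := rfl

lemma height_add (A : Finset (ZMod ν)) (a b : ℕ) :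
    height A (a + b) = height A a + height ((a : ZMod ν) +ᵥ A) b := by
  have hmem (s : ℕ) :
      -(s : ZMod ν) ∈ (a : ZMod ν) +ᵥ A ↔ -((a + s : ℕ) : ZMod ν) ∈ A := by
    rw [show -(s : ZMod ν) = (a : ZMod ν) +ᵥ -((a + s : ℕ) : ZMod ν) by
      rw [vadd_eq_add]; push_cast; ring, Finset.vadd_mem_vadd_finset_iff]
  simp only [height, sum_range_add, hmem]

lemma height_self [NeZero ν] (A : Finset (ZMod ν)) : height A ν = ν - 2 * #A := by
  rw [height, ZMod.sum_range_natCast (fun x => if -x ∈ A then (-1 : ℤ) else 1),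
    ← Fintype.sum_equiv (Equiv.neg (ZMod ν)) (fun x => if x ∈ A then (-1 : ℤ) else 1) _
      (fun x => by simp)]
  rw [sum_ite, sum_const, sum_const, filter_mem_eq_inter, univ_inter, filter_not,
    filter_mem_eq_inter, univ_inter, card_sdiff, card_univ, ZMod.card, inter_univ,
    nsmul_eq_mul, nsmul_eq_mul, Nat.cast_sub (by simpa using card_le_univ A)]
  ring

lemma height_mul_of_vadd_eq {A : Finset (ZMod ν)} {a : ℕ} (hA : (a : ZMod ν) +ᵥ A = A)
    (t : ℕ) : height A (t * a) = t * height A a := by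
  induction t with
  | zero => simp [height_zero]
  | succ t ih => rw [Nat.succ_mul, add_comm, height_add, hA, ih]; push_cast; ring

lemma height_add_mul_self [NeZero ν] (A : Finset (ZMod ν)) (a t : ℕ) :
    height A (a + t * ν) = height A a + t * (ν - 2 * #A) := by
  rw [height_add, height_mul_of_vadd_eq (by simp) t, height_self, card_vadd_finset]

/-- Both sides are `height A (ν * a)`: `a`-periodicity and `ν`-periodicity read it in two ways. -/
lemma mul_height_of_vadd_eq [NeZero ν] {A : Finset (ZMod ν)} {a : ℕ}
    (hA : (a : ZMod ν) +ᵥ A = A) : ν * height A a = a * (ν - 2 * #A) := by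
  rw [← height_mul_of_vadd_eq hA, mul_comm, ← zero_add (a * ν), height_add_mul_self,
    height_zero, zero_add]

def weight (k : ℕ) (i : ZMod ν) (A : Finset (ZMod ν)) : ZMod k := height A i.val

lemma weight_zero (k : ℕ) (A : Finset (ZMod ν)) : weight k 0 A = 0 := by
  simp [weight, height_zero]

lemma weight_add [NeZero ν] {k : ℕ} {A : Finset (ZMod ν)}
    (hA : (((ν : ℤ) - 2 * #A : ℤ) : ZMod k) = 0) (i i' : ZMod ν) :
    weight k (i + i') A = weight k i' A + weight k i (i' +ᵥ A) := by
  have hwrap : height A (i'.val + i.val) =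
      height A (i + i').val + ((i'.val + i.val) / ν : ℕ) * (ν - 2 * #A) := by
    rw [← height_add_mul_self, ZMod.val_add, add_comm i.val, Nat.mod_add_div']
  have hsplit : height A (i'.val + i.val) = height A i'.val + height (i' +ᵥ A) i.val := by
    rw [height_add, ZMod.natCast_zmod_val]
  simp only [weight]
  rw [← Int.cast_add, ← hsplit, hwrap, Int.cast_add, Int.cast_mul, hA, mul_zero, add_zero]

lemma height_nonneg_lt_of_mul_eq [NeZero ν] {A : Finset (ZMod ν)} {i : ZMod ν} {k : ℕ}
    (hk : 0 < k) (h : (ν : ℤ) * height A i.val = i.val * k) :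
    0 ≤ height A i.val ∧ height A i.val < k := by
  have hν : (0 : ℤ) < ν := by exact_mod_cast Nat.pos_of_neZero ν
  have hi : (i.val : ℤ) < ν := by exact_mod_cast ZMod.val_lt i
  have hk' : (0 : ℤ) < k := by exact_mod_cast hk
  constructor <;> nlinarith [Int.natCast_nonneg i.val, mul_lt_mul_of_pos_right hi hk']

lemma weight_eq_weight_iff {μ k : ℕ} [NeZero ν] [NeZero μ] [NeZero k] {A : Finset (ZMod ν)}
    {B : Finset (ZMod μ)} (hA : (ν : ℤ) - 2 * #A = k) (hB : (μ : ℤ) - 2 * #B = k)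
    {i : ZMod ν} {j : ZMod μ} (hiA : i +ᵥ A = A) (hjB : j +ᵥ B = B) :
    weight k i A = weight k j B ↔ i.val * μ = j.val * ν := by
  have eA : (ν : ℤ) * height A i.val = i.val * k := by
    rw [← hA]; exact mul_height_of_vadd_eq (by rwa [ZMod.natCast_zmod_val])
  have eB : (μ : ℤ) * height B j.val = j.val * k := by
    rw [← hB]; exact mul_height_of_vadd_eq (by rwa [ZMod.natCast_zmod_val])
  obtain ⟨hA0, hAk⟩ := height_nonneg_lt_of_mul_eq (Nat.pos_of_neZero k) eA
  obtain ⟨hB0, hBk⟩ := height_nonneg_lt_of_mul_eq (Nat.pos_of_neZero k) eB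
  have hν : (ν : ℤ) ≠ 0 := by exact_mod_cast NeZero.ne ν
  have hμ : (μ : ℤ) ≠ 0 := by exact_mod_cast NeZero.ne μ
  have hk : (k : ℤ) ≠ 0 := by exact_mod_cast NeZero.ne k
  rw [weight, weight, ZMod.intCast_eq_intCast_iff', Int.emod_eq_of_lt hA0 hAk,
    Int.emod_eq_of_lt hB0 hBk, ← Nat.cast_inj (R := ℤ)]
  push_cast
  constructor
  · intro h
    apply mul_right_cancel₀ hk
    linear_combination (-(μ : ℤ)) * eA + ν * eB + ν * μ * h
  · intro h
    apply mul_left_cancel₀ (mul_ne_zero hν hμ)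
    linear_combination μ * eA - ν * eB + k * h

lemma cast_sub_two_mul_card {c k : ℕ} (A : Set.powersetCard (ZMod (2 * c + k)) c) :
    ((2 * c + k : ℕ) : ℤ) - 2 * #(A : Finset (ZMod (2 * c + k))) = k := by
  rw [Set.powersetCard.card_eq]; push_cast; ring

variable {n m k : ℕ}

instance : VAdd (ZMod (2 * n + k) × ZMod (2 * m + k)) (Annulus n m k) where
  vadd g x := (g.1 +ᵥ x.1, g.2 +ᵥ x.2.1, x.2.2 + weight k g.1 x.1 - weight k g.2 x.2.1)

lemma vadd_def (g : ZMod (2 * n + k) × ZMod (2 * m + k)) (x : Annulus n m k) :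
    g +ᵥ x = (g.1 +ᵥ x.1, g.2 +ᵥ x.2.1, x.2.2 + weight k g.1 x.1 - weight k g.2 x.2.1) := rfl

variable [NeZero k]

instance : AddAction (ZMod (2 * n + k) × ZMod (2 * m + k)) (Annulus n m k) where
  zero_vadd x := by simp [vadd_def, weight_zero]
  add_vadd g g' x := by
    have hA := congrArg (Int.cast : ℤ → ZMod k) (cast_sub_two_mul_card x.1)
    have hB := congrArg (Int.cast : ℤ → ZMod k) (cast_sub_two_mul_card x.2.1)
    rw [Int.cast_natCast, ZMod.natCast_self] at hA hB
    simp only [vadd_def, Prod.fst_add, Prod.snd_add, add_vadd, Set.powersetCard.coe_vadd,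
      weight_add hA, weight_add hB]
    ring_nf

lemma vadd_eq_self_iff {g : ZMod (2 * n + k) × ZMod (2 * m + k)} {x : Annulus n m k} :
    g +ᵥ x = x ↔ g.1 +ᵥ x.1 = x.1 ∧ g.2 +ᵥ x.2.1 = x.2.1 ∧
      g.1.val * (2 * m + k) = g.2.val * (2 * n + k) := by
  have hweight (hA : g.1 +ᵥ x.1 = x.1) (hB : g.2 +ᵥ x.2.1 = x.2.1) :=
    weight_eq_weight_iff (cast_sub_two_mul_card x.1) (cast_sub_two_mul_card x.2.1)
      (by rw [← Set.powersetCard.coe_vadd, hA]) (by rw [← Set.powersetCard.coe_vadd, hB])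
  rw [vadd_def, Prod.ext_iff, Prod.ext_iff, add_sub_assoc, add_eq_left, sub_eq_zero]
  exact ⟨fun ⟨hA, hB, hw⟩ => ⟨hA, hB, (hweight hA hB).mp hw⟩,
    fun ⟨hA, hB, hv⟩ => ⟨hA, hB, (hweight hA hB).mpr hv⟩⟩

lemma card_fixedBy (g : ZMod (2 * n + k) × ZMod (2 * m + k)) :
    Nat.card (AddAction.fixedBy (Annulus n m k) g) =
      if g.1.val * (2 * m + k) = g.2.val * (2 * n + k) then
        Nat.card (AddAction.fixedBy (Set.powersetCard (ZMod (2 * n + k)) n) g.1) *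
          Nat.card (AddAction.fixedBy (Set.powersetCard (ZMod (2 * m + k)) m) g.2) * k
      else 0 := by
  split_ifs with h
  · have hfix : AddAction.fixedBy (Annulus n m k) g =
        AddAction.fixedBy _ g.1 ×ˢ AddAction.fixedBy _ g.2 ×ˢ Set.univ := by
      ext x
      simp [vadd_eq_self_iff, h]
    rw [hfix, Nat.card_congr (Equiv.Set.prod _ _), Nat.card_prod,
      Nat.card_congr (Equiv.Set.prod _ _), Nat.card_prod, Nat.card_univ, Nat.card_zmod, mul_assoc]
  · rw [Nat.card_eq_zero]
    exact Or.inl ⟨fun x => h (vadd_eq_self_iff.mp x.2).2.2⟩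

lemma sum_card_fixedBy :
    ∑ g : ZMod (2 * n + k) × ZMod (2 * m + k), Nat.card (AddAction.fixedBy (Annulus n m k) g) =
      k * ∑ d ∈ (Nat.gcd (2 * n + k) (Nat.gcd n m)).divisors,
        Nat.totient d * (Nat.choose ((2 * n + k) / d) (n / d) *
          Nat.choose ((2 * m + k) / d) (m / d)) := by
  set C : ℕ → ℕ → ℕ → ℕ := fun c ν d ↦
    if d ∣ c then (ν / d).choose (c / d) else 0
  have hrow (i : ZMod (2 * n + k)) :
      ∑ j : ZMod (2 * m + k), Nat.card (AddAction.fixedBy (Annulus n m k) (i, j)) =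
        C n (2 * n + k) (addOrderOf i) * k *
          if addOrderOf i ∣ 2 * m + k then C m (2 * m + k) (addOrderOf i) else 0 := by
    rw [← ZMod.sum_ite_val_mul_eq i (C m (2 * m + k)), mul_sum]
    refine sum_congr rfl fun j _ => ?_
    simp only [card_fixedBy, Set.powersetCard.card_fixedBy, Nat.card_zmod, C]
    split_ifs <;> ring
  rw [Fintype.sum_prod_type, sum_congr rfl fun i _ => hrow i,
    IsAddCyclic.sum_addOrderOf (fun d => C n (2 * n + k) d * k *
      if d ∣ 2 * m + k then C m (2 * m + k) d else 0), ZMod.card,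
    ← Nat.divisors_filter_dvd_of_dvd (NeZero.ne _) (Nat.gcd_dvd_left _ _), sum_filter, mul_sum]
  refine sum_congr rfl fun d hd => ?_
  have hdN := Nat.dvd_of_mem_divisors hd
  simp only [C, Nat.dvd_gcd_iff, hdN, true_and, smul_eq_mul]
  by_cases hdn : d ∣ n
  · by_cases hdm : d ∣ m
    · have hdk : d ∣ k := (Nat.dvd_add_right (dvd_mul_of_dvd_right hdn 2)).mp hdN
      have hdM : d ∣ 2 * m + k := dvd_add (dvd_mul_of_dvd_right hdm 2) hdk
      simp only [hdn, hdm, hdM, and_self, if_true]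
      ring
    · simp [hdm]
  · simp [hdn]

lemma nonempty : Nonempty (Annulus n m k) := by
  have := Set.powersetCard.nonempty_of_le (α := ZMod (2 * n + k)) (n := n) (by simp; omega)
  have := Set.powersetCard.nonempty_of_le (α := ZMod (2 * m + k)) (n := m) (by simp; omega)
  infer_instance

end Annulus

theorem annular_formula_pos_integer (n m k : ℕ) (hk : 0 < k) :
    ∃ F : ℕ, 0 < F ∧
      F * ((2 * n + k) * (2 * m + k)) =
        k * ∑ d ∈ (Nat.gcd (2 * n + k) (Nat.gcd n m)).divisors,
          Nat.totient d * (Nat.choose ((2 * n + k) / d) (n / d) *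
            Nat.choose ((2 * m + k) / d) (m / d)) := by
  have : NeZero k := ⟨hk.ne'⟩
  have : Nonempty (AddAction.orbitRel.Quotient (ZMod (2 * n + k) × ZMod (2 * m + k))
      (Annulus n m k)) := Annulus.nonempty.map (Quotient.mk _)
  refine ⟨Nat.card (AddAction.orbitRel.Quotient (ZMod (2 * n + k) × ZMod (2 * m + k))
    (Annulus n m k)), Nat.card_pos, ?_⟩
  rw [← Annulus.sum_card_fixedBy, AddAction.sum_natCard_fixedBy_eq_natCard_orbits_mul_natCard,
    Nat.card_prod, Nat.card_zmod, Nat.card_zmod]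
end

section
/- Let p be a prime and n a positive integer not divisible by p. Then (1/(2n+p)) · Σ_{d | gcd(2n+p, n)} φ(d) · C((2n+p)/d, n/d) = (1/(2n+p)) · C(2n+p, n), and moreover (2n+p) divides C(2n+p, n). -/
theorem prime_crosscuts_not_dvd (p n : ℕ) (hp : p.Prime) (hn : 0 < n) (h : ¬ p ∣ n) :
    (∑ d ∈ (Nat.gcd (2 * n + p) n).divisors,
        Nat.totient d * Nat.choose ((2 * n + p) / d) (n / d)) =
      Nat.choose (2 * n + p) n ∧ (2 * n + p) ∣ Nat.choose (2 * n + p) n := by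
  have hpn : Nat.Coprime p n := (Nat.Prime.coprime_iff_not_dvd hp).mpr h
  have hc : Nat.Coprime (2 * n + p) n := by
    have := (Nat.coprime_add_mul_left_left p n 2).mpr hpn
    rwa [add_comm, mul_comm n 2] at this
  constructor
  · have hg : Nat.gcd (2 * n + p) n = 1 := hc
    simp [hg]
  · have hp2 := hp.two_le
    have hm : 2 * n + p = (2 * n + p - 1) + 1 := by omega
    have hnn : n = (n - 1) + 1 := by omega
    have key := Nat.add_one_mul_choose_eq (2 * n + p - 1) (n - 1)
    rw [← hm, ← hnn] at key
    have hdvd : (2 * n + p) ∣ Nat.choose (2 * n + p) n * n := by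
      exact ⟨Nat.choose (2 * n + p - 1) (n - 1), key.symm⟩
    exact hc.dvd_of_dvd_mul_right hdvd
end

section
/- Let p be a prime and n a positive integer divisible by p. Then (1/(2n+p)) · Σ_{d | gcd(2n+p, n)} φ(d) · C((2n+p)/d, n/d) = (1/(2n+p)) · C(2n+p, n) + ((p-1)/p) · Cat(n/p), where Cat(m) = C(2m, m)/(m+1) is the m-th Catalan number. -/
lemma choose_two_mul_add_one (m : ℕ) :
    Nat.choose (2 * m + 1) m = (2 * m + 1) * catalan m := by
  apply Nat.eq_of_mul_eq_mul_left (show 0 < m + 1 by omega)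
  have h1 : (2 * m + 1) * Nat.choose (2 * m) m = Nat.choose (2 * m + 1) (m + 1) * (m + 1) :=
    Nat.add_one_mul_choose_eq (2 * m) m
  have h2 : Nat.choose (2 * m + 1) (m + 1) = Nat.choose (2 * m + 1) m := by
    have := Nat.choose_symm (show m + 1 ≤ 2 * m + 1 by omega)
    simpa [show 2 * m + 1 - (m + 1) = m by omega] using this.symm
  have h3 : (m + 1) * catalan m = Nat.choose (2 * m) m := by
    have := succ_mul_catalan_eq_centralBinom m
    simpa [Nat.centralBinom] using this
  rw [h2] at h1
  nlinarith [h1, h3]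

theorem prime_crosscuts_dvd (p n : ℕ) (hp : p.Prime) (hn : 0 < n) (h : p ∣ n) :
    p * (∑ d ∈ (Nat.gcd (2 * n + p) n).divisors,
        Nat.totient d * Nat.choose ((2 * n + p) / d) (n / d)) =
      p * Nat.choose (2 * n + p) n + (2 * n + p) * ((p - 1) * catalan (n / p)) := by
  obtain ⟨m, rfl⟩ := h
  have hm : 0 < m := Nat.pos_of_ne_zero fun hz => by simp [hz] at hn
  have hp0 : 0 < p := hp.pos
  have hgcd : Nat.gcd (2 * (p * m) + p) (p * m) = p := by
    have hco : Nat.Coprime (2 * m + 1) m := by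
      have := (Nat.coprime_add_mul_right_left 1 m 2).mpr (Nat.coprime_one_left m)
      simpa [add_comm] using this
    calc Nat.gcd (2 * (p * m) + p) (p * m) = Nat.gcd (p * (2 * m + 1)) (p * m) := by ring_nf
      _ = p * Nat.gcd (2 * m + 1) m := Nat.gcd_mul_left p _ _
      _ = p := by rw [hco]; ring
  rw [hgcd, hp.divisors]
  rw [Finset.sum_pair hp.one_lt.ne]
  have e1 : (2 * (p * m) + p) / p = 2 * m + 1 := by
    rw [show 2 * (p * m) + p = p * (2 * m + 1) by ring, Nat.mul_div_cancel_left _ hp0]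
  have e2 : p * m / p = m := Nat.mul_div_cancel_left m hp0
  rw [e1, e2, Nat.totient_one, Nat.totient_prime hp, Nat.div_one, Nat.div_one,
    choose_two_mul_add_one]
  ring
end

section
/- For all non-negative integers n and k, not both zero, the quantity (1/(2n+k)) · Σ_{d | gcd(2n+k, n)} φ(d) · C((2n+k)/d, n/d) is a positive integer. -/
open Finset Pointwise AddAction

namespace MaximalCrosscutAux

instance confAddAction (m n : ℕ) : AddAction (ZMod m) {s : Finset (ZMod m) // s.card = n} where
  vadd a s := ⟨a +ᵥ s.1, by rw [Finset.card_vadd_finset]; exact s.2⟩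
  zero_vadd s := Subtype.ext (zero_vadd _ s.1)
  add_vadd a b s := Subtype.ext (add_vadd a b s.1)


variable {m n : ℕ}

lemma fiber_card [NeZero m] (a : ZMod m) (q : ZMod m ⧸ AddSubgroup.zmultiples a) :
    Nat.card {x : ZMod m // (QuotientAddGroup.mk x : ZMod m ⧸ AddSubgroup.zmultiples a) = q}
      = addOrderOf a := by
  have e1 : {x : ZMod m // (QuotientAddGroup.mk x : ZMod m ⧸ AddSubgroup.zmultiples a) = q}
      ≃ ((QuotientAddGroup.mk : ZMod m → ZMod m ⧸ AddSubgroup.zmultiples a) ⁻¹' {q}) :=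
    Equiv.subtypeEquivRight fun x => by simp
  rw [Nat.card_congr e1,
    Nat.card_congr (QuotientAddGroup.preimageMkEquivAddSubgroupProdSet _ _)]
  simp [← Nat.card_eq_fintype_card, Nat.card_zmultiples]

lemma vadd_finset_eq_iff {G : Type*} [AddGroup G] [DecidableEq G] {a : G} {s : Finset G} :
    a +ᵥ s = s ↔ ∀ x ∈ s, a + x ∈ s := by
  constructor
  · intro h x hx
    have : a +ᵥ x ∈ a +ᵥ s := Finset.vadd_mem_vadd_finset hx
    rwa [h] at this
  · intro h
    apply Finset.eq_of_subset_of_card_le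
    · intro y hy
      obtain ⟨x, hx, rfl⟩ := Finset.mem_vadd_finset.1 hy
      exact h x hx
    · rw [Finset.card_vadd_finset]

lemma card_fixed (m n : ℕ) [NeZero m] (a : ZMod m) :
    Nat.card {s : Finset (ZMod m) // s.card = n ∧ a +ᵥ s = s} =
      if addOrderOf a ∣ n then (m / addOrderOf a).choose (n / addOrderOf a) else 0 := by
  classical
  set d := addOrderOf a with hd
  have hd0 : 0 < d := addOrderOf_pos a
  set H := AddSubgroup.zmultiples a with hH
  letI : Fintype (ZMod m ⧸ H) := Fintype.ofFinite _
  have hQcard : Fintype.card (ZMod m ⧸ H) * d = m := by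
    have h1 : Nat.card (ZMod m) = Nat.card (ZMod m ⧸ H) * Nat.card H :=
      AddSubgroup.card_eq_card_quotient_mul_card_addSubgroup H
    rw [Nat.card_zmod, Nat.card_zmultiples] at h1
    rw [← Nat.card_eq_fintype_card, ← h1]
  -- the lift of a subset of the quotient
  set lift : Finset (ZMod m ⧸ H) → Finset (ZMod m) :=
    fun t => univ.filter (fun x => (QuotientAddGroup.mk x : ZMod m ⧸ H) ∈ t) with hlift
  have hmem : ∀ t x, x ∈ lift t ↔ (QuotientAddGroup.mk x : ZMod m ⧸ H) ∈ t := by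
    intro t x; simp [hlift]
  have hfix : ∀ t, a +ᵥ lift t = lift t := by
    intro t
    rw [vadd_finset_eq_iff]
    intro x hx
    rw [hmem] at hx ⊢
    have : (QuotientAddGroup.mk (a + x) : ZMod m ⧸ H) = QuotientAddGroup.mk x := by
      rw [QuotientAddGroup.eq]
      have : -(a + x) + x = -a := by abel
      rw [this]
      exact neg_mem (AddSubgroup.mem_zmultiples a)
    rwa [this]
  have hcard : ∀ t, (lift t).card = t.card * d := by
    intro t
    rw [Finset.card_eq_sum_card_fiberwise
      (f := fun x => (QuotientAddGroup.mk x : ZMod m ⧸ H)) (t := t)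
      (fun x hx => (hmem t x).1 hx)]
    rw [Finset.sum_congr rfl (fun q _ => ?_), Finset.sum_const, smul_eq_mul]
    show ((lift t).filter (fun x => (QuotientAddGroup.mk x : ZMod m ⧸ H) = q)).card = d
    have : (lift t).filter (fun x => (QuotientAddGroup.mk x : ZMod m ⧸ H) = q) =
        univ.filter (fun x => (QuotientAddGroup.mk x : ZMod m ⧸ H) = q) := by
      ext x
      simp only [Finset.mem_filter, hmem, Finset.mem_univ, true_and]
      rename_i hq
      exact ⟨fun h => h.2, fun h => ⟨h ▸ hq, h⟩⟩
    rw [this, ← Fintype.card_subtype, ← Nat.card_eq_fintype_card, fiber_card]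
  have himg : ∀ s : Finset (ZMod m), a +ᵥ s = s →
      lift (s.image (fun x => (QuotientAddGroup.mk x : ZMod m ⧸ H))) = s := by
    intro s hs
    ext x
    rw [hmem, Finset.mem_image]
    constructor
    · rintro ⟨y, hy, hxy⟩
      rw [QuotientAddGroup.eq] at hxy
      have hz : -y + x ∈ H := hxy
      have h2 := vadd_eq_self_of_mem_zmultiples hz hs
      rw [← h2]
      have h3 : (-y + x) +ᵥ y = x := by show -y + x + y = x; abel
      exact Finset.mem_vadd_finset.2 ⟨y, hy, h3⟩
    · intro hx
      exact ⟨x, hx, rfl⟩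
  have himg2 : ∀ t, (lift t).image (fun x => (QuotientAddGroup.mk x : ZMod m ⧸ H)) = t := by
    intro t
    ext q
    rw [Finset.mem_image]
    constructor
    · rintro ⟨x, hx, rfl⟩; exact (hmem t x).1 hx
    · intro hq
      exact ⟨q.out, (hmem t _).2 (by rwa [QuotientAddGroup.out_eq']), q.out_eq'⟩
  by_cases hdn : d ∣ n
  · rw [if_pos hdn]
    have e : {s : Finset (ZMod m) // s.card = n ∧ a +ᵥ s = s} ≃
        {t : Finset (ZMod m ⧸ H) // t.card = n / d} :=
      { toFun := fun s => ⟨s.1.image (fun x => (QuotientAddGroup.mk x : ZMod m ⧸ H)), by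
          have h1 := hcard (s.1.image (fun x => (QuotientAddGroup.mk x : ZMod m ⧸ H)))
          rw [himg s.1 s.2.2, s.2.1] at h1
          exact (Nat.div_eq_of_eq_mul_left hd0 h1).symm⟩
        invFun := fun t => ⟨lift t.1, by
          rw [hcard, t.2, Nat.div_mul_cancel hdn], hfix t.1⟩
        left_inv := fun s => Subtype.ext (himg s.1 s.2.2)
        right_inv := fun t => Subtype.ext (himg2 t.1) }
    rw [Nat.card_congr e, Nat.card_eq_fintype_card, Fintype.card_finset_len]
    congr 1
    exact (Nat.div_eq_of_eq_mul_left hd0 hQcard.symm).symm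
  · rw [if_neg hdn]
    rw [Nat.card_eq_zero]
    left
    constructor
    rintro ⟨s, hs, hfs⟩
    apply hdn
    have h1 := hcard (s.image (fun x => (QuotientAddGroup.mk x : ZMod m ⧸ H)))
    rw [himg s hfs, hs] at h1
    exact ⟨_, h1.trans (mul_comm _ _)⟩

end MaximalCrosscutAux


open MaximalCrosscutAux in
theorem maximal_crosscut_pos_integer (n k : ℕ) (h : n + k ≠ 0) :
    ∃ c : ℕ, 0 < c ∧
      (2 * n + k) * c =
        ∑ d ∈ (Nat.gcd (2 * n + k) n).divisors,
          Nat.totient d * Nat.choose ((2 * n + k) / d) (n / d) := by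
  classical
  set m := 2 * n + k with hm
  have hm0 : m ≠ 0 := by omega
  haveI : NeZero m := ⟨hm0⟩
  set α := {s : Finset (ZMod m) // s.card = n} with hα
  letI : ∀ a : ZMod m, Fintype (fixedBy α a) := fun a => Fintype.ofFinite _
  letI : Fintype (Quotient (orbitRel (ZMod m) α)) := Fintype.ofFinite _
  -- Burnside
  have hb := AddAction.sum_card_fixedBy_eq_card_orbits_mul_card_addGroup (ZMod m) α
  have hcardZ : Fintype.card (ZMod m) = m := ZMod.card m
  -- α is nonempty
  have hne : Nonempty α := by
    obtain ⟨s, -, hs⟩ := Finset.exists_subset_card_eq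
      (s := (univ : Finset (ZMod m))) (n := n) (by rw [Finset.card_univ, hcardZ]; omega)
    exact ⟨⟨s, hs⟩⟩
  haveI : Nonempty (Quotient (orbitRel (ZMod m) α)) := Nonempty.map (Quotient.mk _) hne
  rw [hcardZ] at hb
  refine ⟨Fintype.card (Quotient (orbitRel (ZMod m) α)), Fintype.card_pos, ?_⟩
  rw [mul_comm, ← hb]
  -- compute each fixed-point count
  have hfix : ∀ a : ZMod m, Fintype.card (fixedBy α a) =
      if addOrderOf a ∣ n then (m / addOrderOf a).choose (n / addOrderOf a) else 0 := by
    intro a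
    rw [← card_fixed m n a, ← Nat.card_eq_fintype_card]
    refine Nat.card_congr ⟨fun p => ⟨p.1.1, p.1.2, congrArg Subtype.val p.2⟩,
      fun s => ⟨⟨s.1, s.2.1⟩, Subtype.ext s.2.2⟩, fun p => rfl, fun s => rfl⟩
  rw [Finset.sum_congr rfl (fun a _ => hfix a)]
  -- group by order
  rw [← Finset.sum_fiberwise_of_maps_to (g := fun a : ZMod m => addOrderOf a)
    (t := m.divisors) (fun a _ => Nat.mem_divisors.2 ⟨by have := addOrderOf_dvd_card (x := a); rwa [hcardZ] at this, hm0⟩)]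
  have hinner : ∀ d ∈ m.divisors,
      (∑ a ∈ univ.filter (fun a : ZMod m => addOrderOf a = d),
        if addOrderOf a ∣ n then (m / addOrderOf a).choose (n / addOrderOf a) else 0) =
      Nat.totient d * (if d ∣ n then (m / d).choose (n / d) else 0) := by
    intro d hd
    rw [Finset.sum_congr rfl (fun a ha => by rw [(Finset.mem_filter.1 ha).2]),
      Finset.sum_const, smul_eq_mul]
    congr 1
    exact IsAddCyclic.card_addOrderOf_eq_totient (by rw [hcardZ]; exact (Nat.mem_divisors.1 hd).1)
  rw [Finset.sum_congr rfl hinner]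
  have hsplit : ∀ d : ℕ, Nat.totient d * (if d ∣ n then (m / d).choose (n / d) else 0) =
      if d ∣ n then Nat.totient d * (m / d).choose (n / d) else 0 := by
    intro d; split <;> simp
  rw [Finset.sum_congr rfl (fun d _ => hsplit d), ← Finset.sum_filter]
  congr 1
  ext d
  simp only [Finset.mem_filter, Nat.mem_divisors, Nat.dvd_gcd_iff]
  constructor
  · rintro ⟨⟨h1, -⟩, h2⟩; exact ⟨⟨h1, h2⟩, Nat.gcd_ne_zero_left hm0⟩
  · rintro ⟨⟨h1, h2⟩, -⟩; exact ⟨⟨h1, hm0⟩, h2⟩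
end

section
/- For every non-negative integer n ≥ 3, the number of orbits of n-element subsets of Z/(2n)Z under rotation by Z/(2n)Z is strictly less than the n-th Catalan number Cat(n) = C(2n,n)/(n+1). -/
/-- The number of rotation-orbits (binary necklaces) of `n`-element subsets of `ZMod N`. -/
noncomputable def necklaceCount (N n : ℕ) : ℕ :=
  Nat.card (Quot (fun S T : {S : Finset (ZMod N) // S.card = n} =>
    ∃ g : ZMod N, S.1.image (fun x => g + x) = T.1))

/-!
By Burnside's lemma, `2n` times the number of orbits is `∑ g, |Fix g|`. The identity fixes all
`centralBinom n` subsets. A nonzero `g` of order `d ≥ 2` fixes `S` iff `S` is a union of cosets of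
`⟨g⟩`, so `d ∣ n` and `S` is determined by an `(n / d)`-subset of the quotient, which has
`2 (n / d)` elements: at most `centralBinom (n / d) ≤ centralBinom (n / 2)` choices. In the cyclic
group `ZMod (2n)` at most `n - 1` nonzero elements satisfy `n • g = 0`, so
`2n · #orbits ≤ centralBinom n + (n - 1) centralBinom (n / 2)`. Since `centralBinom` at least
triples at each step, `(n + 1) centralBinom (n / 2) < centralBinom n`, and together with
`(n + 1) catalan n = centralBinom n` this gives `#orbits < catalan n`.
-/

open Pointwise AddAction

namespace QuotientAddGroup

variable {G : Type*} [AddCommGroup G] {H : AddSubgroup G}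

lemma preimage_image_mk_eq_of_le_stabilizer {S : Set G} (hS : H ≤ stabilizer G S) :
    (mk : G → G ⧸ H) ⁻¹' (mk '' S) = S := by
  refine Set.Subset.antisymm ?_ (Set.subset_preimage_image _ _)
  rintro x ⟨y, hy, hyx⟩
  have hmem : -y + x ∈ stabilizer G S := hS (QuotientAddGroup.eq.mp hyx)
  simpa [vadd_eq_add] using (mem_stabilizer_set.mp hmem y).mpr hy

lemma card_eq_natCard_mul_card_image_mk [DecidableEq G] [DecidableEq (G ⧸ H)] {S : Finset G}
    (hS : H ≤ stabilizer G S) :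
    S.card = Nat.card H * (S.image (mk : G → G ⧸ H)).card := by
  rw [← stabilizer_coe_finset] at hS
  have key := Nat.card_congr (preimageMkEquivAddSubgroupProdSet H (mk '' (S : Set G)))
  rw [preimage_image_mk_eq_of_le_stabilizer hS, Nat.card_prod] at key
  rwa [Nat.card_coe_set_eq, Set.ncard_coe_finset, Nat.card_coe_set_eq, ← Finset.coe_image,
    Set.ncard_coe_finset] at key

end QuotientAddGroup

namespace Set.powersetCard

open QuotientAddGroup

variable {G : Type*} [AddCommGroup G] [DecidableEq G] {H : AddSubgroup G} {n : ℕ}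

lemma stabilizer_eq_stabilizer_finset (S : powersetCard G n) :
    stabilizer G S = stabilizer G (S : Finset G) := by
  rw [addAction_stabilizer_coe, ← coe_coe, stabilizer_coe_finset]

lemma natCard_dvd_of_le_stabilizer {S : powersetCard G n} (hS : H ≤ stabilizer G S) :
    Nat.card H ∣ n := by
  classical
  rw [stabilizer_eq_stabilizer_finset] at hS
  exact ⟨_, (card_eq S).symm.trans (card_eq_natCard_mul_card_image_mk hS)⟩

variable (H n) in
lemma natCard_le_stabilizer_le_choose [Finite G] :
    Nat.card {S : powersetCard G n // H ≤ stabilizer G S} ≤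
      (Nat.card (G ⧸ H)).choose (n / Nat.card H) := by
  classical
  let f (S : {S : powersetCard G n // H ≤ stabilizer G S}) :
      powersetCard (G ⧸ H) (n / Nat.card H) :=
    ofCard (s := (S.1 : Finset G).image mk) <| by
      have hS := S.2
      rw [stabilizer_eq_stabilizer_finset] at hS
      exact (Nat.div_eq_of_eq_mul_right Nat.card_pos
        ((card_eq S.1).symm.trans (card_eq_natCard_mul_card_image_mk hS))).symm
  have hf : Function.Injective f := by
    rintro ⟨S, hS⟩ ⟨T, hT⟩ hST
    rw [stabilizer_eq_stabilizer_finset, ← stabilizer_coe_finset] at hS hT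
    have himage : (S : Finset G).image mk = (T : Finset G).image (mk : G → G ⧸ H) :=
      congrArg (fun U => (U.1 : Finset (G ⧸ H))) hST
    have := congrArg (fun U : Finset (G ⧸ H) => mk ⁻¹' (U : Set (G ⧸ H))) himage
    simp only [Finset.coe_image, preimage_image_mk_eq_of_le_stabilizer hS,
      preimage_image_mk_eq_of_le_stabilizer hT, Finset.coe_inj] at this
    exact Subtype.ext (Subtype.ext this)
  calc _ ≤ Nat.card (powersetCard (G ⧸ H) (n / Nat.card H)) :=
        Nat.card_le_card_of_injective f hf
    _ = _ := Set.powersetCard.card _ _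

variable {g : G}

lemma mem_fixedBy_iff_zmultiples_le_stabilizer {S : powersetCard G n} :
    S ∈ fixedBy (powersetCard G n) g ↔ AddSubgroup.zmultiples g ≤ stabilizer G S := by
  rw [AddSubgroup.zmultiples_le, mem_stabilizer_iff, mem_fixedBy]

lemma addOrderOf_dvd_of_mem_fixedBy {S : powersetCard G n}
    (hS : S ∈ fixedBy (powersetCard G n) g) : addOrderOf g ∣ n :=
  Nat.card_zmultiples g ▸
    natCard_dvd_of_le_stabilizer (mem_fixedBy_iff_zmultiples_le_stabilizer.mp hS)

lemma natCard_fixedBy_eq_zero (h : n • g ≠ 0) : Nat.card (fixedBy (powersetCard G n) g) = 0 :=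
  have : IsEmpty (fixedBy (powersetCard G n) g) :=
    ⟨fun S => h (addOrderOf_dvd_iff_nsmul_eq_zero.mp (addOrderOf_dvd_of_mem_fixedBy S.2))⟩
  Nat.card_of_isEmpty

lemma natCard_fixedBy_le_centralBinom_half [Finite G] (hG : Nat.card G = 2 * n) (hg : g ≠ 0) :
    Nat.card (fixedBy (powersetCard G n) g) ≤ Nat.centralBinom (n / 2) := by
  by_cases hfix : IsEmpty (fixedBy (powersetCard G n) g)
  · simp
  obtain ⟨⟨S, hS⟩⟩ := not_isEmpty_iff.mp hfix
  obtain ⟨m, hm⟩ := addOrderOf_dvd_of_mem_fixedBy hS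
  have hd : 2 ≤ addOrderOf g := by
    have := addOrderOf_pos g
    have := mt AddMonoid.addOrderOf_eq_one_iff.mp hg
    omega
  have hindex : (AddSubgroup.zmultiples g).index = 2 * m := by
    have := (AddSubgroup.zmultiples g).index_mul_card
    rw [Nat.card_zmultiples, hG, hm] at this
    exact Nat.eq_of_mul_eq_mul_right (m := addOrderOf g) (by omega) (by rw [this]; ring)
  calc Nat.card (fixedBy (powersetCard G n) g)
      = Nat.card {S : powersetCard G n // AddSubgroup.zmultiples g ≤ stabilizer G S} :=
        Nat.card_congr (Equiv.subtypeEquivRight fun _ => mem_fixedBy_iff_zmultiples_le_stabilizer)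
    _ ≤ (AddSubgroup.zmultiples g).index.choose (n / Nat.card (AddSubgroup.zmultiples g)) :=
        natCard_le_stabilizer_le_choose _ _
    _ = Nat.centralBinom m := by
        rw [hindex, Nat.card_zmultiples, hm,
          Nat.mul_div_cancel_left _ (by omega), Nat.centralBinom_eq_two_mul_choose]
    _ ≤ Nat.centralBinom (n / 2) :=
        Nat.centralBinom_strictMono.monotone ((Nat.le_div_iff_mul_le two_pos).mpr (by nlinarith))

lemma sum_natCard_fixedBy_le [Fintype G] [IsAddCyclic G] (hG : Nat.card G = 2 * n) (hn : 0 < n) :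
    ∑ g : G, Nat.card (fixedBy (powersetCard G n) g) ≤
      Nat.centralBinom n + (n - 1) * Nat.centralBinom (n / 2) := by
  have hzero : Nat.card (fixedBy (powersetCard G n) (0 : G)) = Nat.centralBinom n := by
    rw [fixedBy_zero_eq_univ, Nat.card_univ, Set.powersetCard.card, hG,
      Nat.centralBinom_eq_two_mul_choose]
  have hcount : {g ∈ Finset.univ.erase (0 : G) | n • g = 0}.card ≤ n - 1 := by
    rw [Finset.filter_erase, Finset.card_erase_of_mem (by simp)]
    exact Nat.sub_le_sub_right (IsAddCyclic.card_nsmul_eq_zero_le hn) 1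
  rw [← Finset.add_sum_erase _ _ (Finset.mem_univ 0), hzero]
  gcongr
  calc ∑ g ∈ Finset.univ.erase (0 : G), Nat.card (fixedBy (powersetCard G n) g)
      ≤ ∑ g ∈ Finset.univ.erase (0 : G) with n • g = 0, Nat.centralBinom (n / 2) := by
        rw [Finset.sum_filter]
        refine Finset.sum_le_sum fun g hg => ?_
        split_ifs with h
        · exact natCard_fixedBy_le_centralBinom_half hG (Finset.ne_of_mem_erase hg)
        · exact (natCard_fixedBy_eq_zero h).le
    _ ≤ (n - 1) * Nat.centralBinom (n / 2) := by
        rw [Finset.sum_const, smul_eq_mul]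
        gcongr

end Set.powersetCard

lemma AddAction.natCard_orbitRel_quotient_mul_card (G X : Type*) [AddGroup G] [Fintype G]
    [AddAction G X] [Finite X] :
    Nat.card (orbitRel.Quotient G X) * Fintype.card G = ∑ g : G, Nat.card (fixedBy X g) := by
  classical
  have := Fintype.ofFinite X
  simp only [Nat.card_eq_fintype_card]
  exact (sum_card_fixedBy_eq_card_orbits_mul_card_addGroup G X).symm

lemma necklaceCount_eq_natCard_orbitRel_quotient (N n : ℕ) :
    necklaceCount N n = Nat.card (orbitRel.Quotient (ZMod N) (Set.powersetCard (ZMod N) n)) :=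
  Nat.card_congr <| Quot.congrRight fun (S T : Set.powersetCard (ZMod N) n) => by
    change _ ↔ S ∈ orbit (ZMod N) T
    rw [mem_orbit_symm, mem_orbit_iff]
    exact exists_congr fun g => (Subtype.ext_iff (a1 := g +ᵥ S) (a2 := T)).symm

lemma Nat.three_pow_mul_centralBinom_le {k : ℕ} (hk : 0 < k) (j : ℕ) :
    3 ^ j * centralBinom k ≤ centralBinom (k + j) := by
  induction j with
  | zero => simp
  | succ j ih =>
    have hstep := succ_mul_centralBinom_succ (k + j)
    refine Nat.le_of_mul_le_mul_left (c := k + j + 1) ?_ (by omega)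
    calc (k + j + 1) * (3 ^ (j + 1) * centralBinom k)
        = 3 * (k + j + 1) * (3 ^ j * centralBinom k) := by ring
      _ ≤ 2 * (2 * (k + j) + 1) * centralBinom (k + j) := Nat.mul_le_mul (by omega) ih
      _ = (k + j + 1) * centralBinom (k + j + 1) := hstep.symm

lemma Nat.succ_mul_centralBinom_half_lt {n : ℕ} (hn : 3 ≤ n) :
    (n + 1) * centralBinom (n / 2) < centralBinom n := by
  obtain ⟨j, hj⟩ : ∃ j, n = n / 2 + j := ⟨n - n / 2, by omega⟩
  have hpow : n + 1 < 3 ^ j := by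
    have key : ∀ i, 2 ≤ i → 2 * i + 1 < 3 ^ i := fun i hi => by
      induction i, hi using Nat.le_induction with
      | base => norm_num
      | succ i _ ih => rw [pow_succ]; omega
    have := key j (by omega)
    omega
  calc (n + 1) * centralBinom (n / 2) < 3 ^ j * centralBinom (n / 2) :=
        Nat.mul_lt_mul_of_pos_right hpow (centralBinom_pos _)
    _ ≤ centralBinom (n / 2 + j) := three_pow_mul_centralBinom_le (by omega) j
    _ = centralBinom n := by rw [← hj]

theorem necklace_lt_catalan (n : ℕ) (h : 3 ≤ n) :
    necklaceCount (2 * n) n < catalan n := by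
  have : NeZero (2 * n) := ⟨by omega⟩
  have hburnside := natCard_orbitRel_quotient_mul_card (ZMod (2 * n))
    (Set.powersetCard (ZMod (2 * n)) n)
  rw [ZMod.card] at hburnside
  have hsum := Set.powersetCard.sum_natCard_fixedBy_le (G := ZMod (2 * n)) (Nat.card_zmod _)
    (by omega : 0 < n)
  rw [necklaceCount_eq_natCard_orbitRel_quotient]
  refine Nat.lt_of_mul_lt_mul_left (a := 2 * n * (n + 1)) ?_
  calc 2 * n * (n + 1) * Nat.card (orbitRel.Quotient _ _)
      = (n + 1) * (Nat.card (orbitRel.Quotient _ _) * (2 * n)) := by ring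
    _ ≤ (n + 1) * (n.centralBinom + (n - 1) * (n / 2).centralBinom) := by
        rw [hburnside]
        exact Nat.mul_le_mul_left _ hsum
    _ = (n + 1) * n.centralBinom + (n - 1) * ((n + 1) * (n / 2).centralBinom) := by ring
    _ < (n + 1) * n.centralBinom + (n - 1) * n.centralBinom := by
        gcongr
        · omega
        · exact Nat.succ_mul_centralBinom_half_lt h
    _ = 2 * n * ((n + 1) * catalan n) := by
        rw [succ_mul_catalan_eq_centralBinom, ← add_mul]
        congr 1
        omega
    _ = 2 * n * (n + 1) * catalan n := by ring
end
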